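/- arXiv:2211.04416 — 4 statements merged into one kernel-verified Lean document; each statement's English description precedes it below -/
import Mathlib

section
/- Let n ∈ ℕ, d ∈ ℕ₀, and let ρ : ℝⁿ → [0,∞) be a nonnegative measurable kernel such that ∫_{ℝⁿ} y^α ρ(y) dy is finite for all multi-indices α with |α| ≤ d. If p ∈ ℝ[x₁,…,xₙ] with deg p ≤ d is a sum of squares of polynomials, then the convolution (p ∗ ρ)(x) = ∫_{ℝⁿ} p(x−y) ρ(y) dy is again (the function of) a sum of squares of polynomials of degree at most d. -/
/-!
Write `p = ∑ gᵢ²`. Over an ordered ring the leading terms of the squares cannot cancel, so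
`2 deg gᵢ ≤ deg p ≤ d`, and it suffices to treat one square `g²` with `2 deg g ≤ d`. Expanding
`g(x - y) = ∑ⱼ Uⱼ(x) Wⱼ(y)` with all `Uⱼ`, `Wⱼ` of degree `≤ deg g`, the convolution becomes
`u(x)ᵀ M u(x)` with `u(x) = (Uⱼ(x))ⱼ` and `M = (∫ Wᵢ Wⱼ ρ)ᵢⱼ`, a Gram matrix whose entries are
finite by the moment condition and which is positive semidefinite because `ρ ≥ 0`. Factoring
`M = Bᵀ B` writes the convolution as `∑ₖ ((B u(x))ₖ)²`.
-/

open MeasureTheory MvPolynomial Matrix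

universe u

theorem IsSumSq.exists_fin_sum_mul_self {R : Type*} [AddCommMonoid R] [Mul R] {p : R}
    (hp : IsSumSq p) : ∃ (k : ℕ) (g : Fin k → R), p = ∑ i, g i * g i := by
  induction hp with
  | zero => exact ⟨0, Fin.elim0, by simp⟩
  | sq_add a _ ih =>
    obtain ⟨k, g, rfl⟩ := ih
    exact ⟨k + 1, Fin.cons a g, by simp [Fin.sum_univ_succ]⟩

namespace MvPolynomial

open MonomialOrder in
theorem two_mul_totalDegree_le_totalDegree_sum_mul_self {σ R ι : Type*} [CommRing R]
    [LinearOrder R] [IsStrictOrderedRing R] {s : Finset ι} (g : ι → MvPolynomial σ R) {i : ι}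
    (hi : i ∈ s) : 2 * (g i).totalDegree ≤ (∑ j ∈ s, g j * g j).totalDegree := by
  classical
  obtain ⟨_, _⟩ := exists_wellFoundedGT σ
  obtain ⟨k, hk, hmax⟩ :=
    s.exists_max_image (fun j => degLex.toSyn (degLex.degree (g j))) ⟨i, hi⟩
  rcases Nat.eq_zero_or_pos (g i).totalDegree with h0 | hpos
  · simp [h0]
  have hik : (g i).totalDegree ≤ (g k).totalDegree := degLex_totalDegree_monotone (hmax i hi)
  have hgk : g k ≠ 0 := by
    rintro hgk
    simp [hgk] at hik
    omega
  -- At twice the largest degLex-leading monomial only the leading coefficients squared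
  -- contribute, and they are positive.
  have hcoeff :
      0 < coeff (degLex.degree (g k) + degLex.degree (g k)) (∑ j ∈ s, g j * g j) := by
    rw [coeff_sum]
    refine Finset.sum_pos' (fun j hj => ?_) ⟨k, hk, ?_⟩
    · by_cases hjk : degLex.degree (g j) = degLex.degree (g k)
      · rw [← hjk, coeff_mul_of_degree_add]
        exact mul_self_nonneg _
      · refine (degLex.coeff_eq_zero_of_lt ?_).ge
        refine degree_mul_le.trans_lt ?_
        have := lt_of_le_of_ne (hmax j hj) (degLex.toSyn.injective.ne hjk)
        simpa using add_lt_add this this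
    · rw [coeff_mul_of_degree_add]
      exact mul_self_pos.mpr (degLex.leadingCoeff_ne_zero_iff.mpr hgk)
  calc 2 * (g i).totalDegree ≤ 2 * (g k).totalDegree := by omega
    _ = (degLex.degree (g k) + degLex.degree (g k)).degree := by
      rw [map_add, degree_degLexDegree, two_mul]
    _ ≤ _ := le_totalDegree (mem_support_iff.mpr hcoeff.ne')

theorem eval_bind₁ {σ τ R : Type*} [CommSemiring R] (z : τ → R) (f : σ → MvPolynomial τ R)
    (a : MvPolynomial σ R) : eval z (bind₁ f a) = eval (fun i => eval z (f i)) a :=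
  eval₂Hom_bind₁ _ _ _ _

theorem totalDegree_bind₁_le {σ τ R : Type*} [CommSemiring R] {f : σ → MvPolynomial τ R}
    (hf : ∀ i, (f i).totalDegree ≤ 1) (a : MvPolynomial σ R) :
    (bind₁ f a).totalDegree ≤ a.totalDegree := by
  conv_lhs => rw [a.as_sum, map_sum]
  refine totalDegree_finsetSum_le fun μ hμ => ?_
  rw [bind₁_monomial]
  refine (totalDegree_mul _ _).trans ?_
  rw [totalDegree_C, zero_add]
  refine (totalDegree_finsetProd _ _).trans (le_trans ?_ (le_totalDegree hμ))
  refine Finset.sum_le_sum fun i _ => (totalDegree_pow _ _).trans ?_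
  simpa using Nat.mul_le_mul_left (μ i) (hf i)

theorem totalDegree_X_le {σ R : Type*} [CommSemiring R] (i : σ) :
    (X i : MvPolynomial σ R).totalDegree ≤ 1 :=
  (totalDegree_monomial_le _ _).trans_eq (by simp)

theorem totalDegree_prod_X_pow_le {σ R : Type*} [CommSemiring R] [Fintype σ] (k : σ → ℕ) :
    (∏ i, X i ^ k i : MvPolynomial σ R).totalDegree ≤ ∑ i, k i :=
  (totalDegree_finsetProd _ _).trans (Finset.sum_le_sum fun i _ =>
    (totalDegree_pow _ _).trans ((Nat.mul_le_mul_left _ (totalDegree_X_le i)).trans_eq (mul_one _)))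

theorem exists_eval_sub_eq_sum_mul {σ : Type u} {R : Type*} [Fintype σ] [CommRing R]
    (a : MvPolynomial σ R) :
    ∃ (ι : Type u) (_ : Fintype ι) (U W : ι → MvPolynomial σ R),
      (∀ i, (U i).totalDegree ≤ a.totalDegree) ∧ (∀ i, (W i).totalDegree ≤ a.totalDegree) ∧
      ∀ x y, eval (x - y) a = ∑ i, eval x (U i) * eval y (W i) := by
  -- `A(x, y) = a(x - y)` as a polynomial in `σ ⊕ σ`; split each of its monomials.
  set A : MvPolynomial (σ ⊕ σ) R := bind₁ (fun i => X (.inl i) - X (.inr i)) a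
  have hA : A.totalDegree ≤ a.totalDegree := totalDegree_bind₁_le (fun i =>
    (totalDegree_sub _ _).trans (max_le (totalDegree_X_le _) (totalDegree_X_le _))) a
  have hsplit (μ : σ ⊕ σ →₀ ℕ) (hμ : μ ∈ A.support) :
      ∑ i, μ (.inl i) ≤ a.totalDegree ∧ ∑ i, μ (.inr i) ≤ a.totalDegree := by
    have : μ.degree ≤ a.totalDegree := (le_totalDegree hμ).trans hA
    rw [Finsupp.degree_eq_sum, Fintype.sum_sum_type] at this
    omega
  refine ⟨A.support, inferInstance, fun μ => C (coeff μ A) * ∏ i, X i ^ μ.1 (.inl i),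
    fun μ => ∏ i, X i ^ μ.1 (.inr i), fun μ => ?_, fun μ => ?_, fun x y => ?_⟩
  · refine (totalDegree_mul _ _).trans ?_
    rw [totalDegree_C, zero_add]
    exact (totalDegree_prod_X_pow_le _).trans (hsplit μ μ.2).1
  · exact (totalDegree_prod_X_pow_le _).trans (hsplit μ μ.2).2
  · have : x - y = fun i =>
        eval (Sum.elim x y) (X (.inl i) - X (.inr i) : MvPolynomial (σ ⊕ σ) R) := by
      ext i
      simp
    rw [this, ← eval_bind₁, eval_eq', ← Finset.sum_coe_sort]
    refine Finset.sum_congr rfl fun μ _ => ?_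
    simp [A, Fintype.prod_sum_type, mul_assoc]

end MvPolynomial

theorem Matrix.PosSemidef.exists_dotProduct_mulVec_eq_sum_sq {ι : Type*} [Fintype ι]
    {M : Matrix ι ι ℝ} (hM : M.PosSemidef) :
    ∃ B : Matrix ι ι ℝ, ∀ v, v ⬝ᵥ M *ᵥ v = ∑ k, (B *ᵥ v) k ^ 2 := by
  classical
  obtain ⟨B, rfl⟩ : ∃ B : Matrix ι ι ℝ, M = star B * B := by
    open scoped MatrixOrder in exact CStarAlgebra.nonneg_iff_eq_star_mul_self.mp hM.nonneg
  refine ⟨B, fun v => ?_⟩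
  rw [← mulVec_mulVec, dotProduct_mulVec, star_eq_conjTranspose, vecMul_conjTranspose]
  simp [dotProduct, sq]

theorem sq_sum_mul_eq_sum_sum {ι R : Type*} [Fintype ι] [CommSemiring R] (v a : ι → R) (r : R) :
    (∑ i, v i * a i) ^ 2 * r = ∑ i, ∑ j, v i * v j * (a i * a j * r) := by
  rw [sq, Finset.sum_mul_sum, Finset.sum_mul]
  exact Finset.sum_congr rfl fun i _ => by
    rw [Finset.sum_mul]
    exact Finset.sum_congr rfl fun j _ => by ring

section Gram

variable {α ι : Type*} [MeasurableSpace α] {μ : Measure α} [Fintype ι] {w : ι → α → ℝ}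
  {ρ : α → ℝ}

theorem integrable_sq_sum_mul (hw : ∀ i j, Integrable (fun y => w i y * w j y * ρ y) μ)
    (v : ι → ℝ) : Integrable (fun y => (∑ i, v i * w i y) ^ 2 * ρ y) μ := by
  simp_rw [sq_sum_mul_eq_sum_sum]
  exact integrable_finsetSum _ fun i _ => integrable_finsetSum _ fun j _ =>
    (hw i j).const_mul _

theorem integral_sq_sum_mul (hw : ∀ i j, Integrable (fun y => w i y * w j y * ρ y) μ)
    (v : ι → ℝ) : ∫ y, (∑ i, v i * w i y) ^ 2 * ρ y ∂μ =
      v ⬝ᵥ Matrix.of (fun i j => ∫ y, w i y * w j y * ρ y ∂μ) *ᵥ v := by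
  simp_rw [sq_sum_mul_eq_sum_sum]
  rw [integral_finsetSum _ fun i _ => integrable_finsetSum _ fun j _ => (hw i j).const_mul _]
  simp_rw [integral_finsetSum _ fun j _ => (hw _ j).const_mul _, integral_const_mul]
  simp only [dotProduct, mulVec, of_apply, Finset.mul_sum]
  exact Finset.sum_congr rfl fun i _ => Finset.sum_congr rfl fun j _ => by ring

theorem exists_integral_sq_sum_mul_eq_sum_sq (hρ : ∀ y, 0 ≤ ρ y)
    (hw : ∀ i j, Integrable (fun y => w i y * w j y * ρ y) μ) :
    ∃ B : Matrix ι ι ℝ, ∀ v, ∫ y, (∑ i, v i * w i y) ^ 2 * ρ y ∂μ = ∑ k, (B *ᵥ v) k ^ 2 := by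
  set M := Matrix.of (fun i j => ∫ y, w i y * w j y * ρ y ∂μ)
  have hM : M.PosSemidef := by
    refine .of_dotProduct_mulVec_nonneg ?_ fun v => ?_
    · ext i j
      simp [M, mul_comm (w i _)]
    · rw [star_trivial, ← integral_sq_sum_mul hw]
      exact integral_nonneg fun y => mul_nonneg (sq_nonneg _) (hρ y)
  obtain ⟨B, hB⟩ := hM.exists_dotProduct_mulVec_eq_sum_sq
  exact ⟨B, fun v => (integral_sq_sum_mul hw v).trans (hB v)⟩

end Gram

section Convolution

variable {σ : Type*} {μ : Measure (σ → ℝ)} {ρ : (σ → ℝ) → ℝ} {d : ℕ}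

def HasFiniteMoments [Fintype σ] (ρ : (σ → ℝ) → ℝ) (μ : Measure (σ → ℝ)) (d : ℕ) : Prop :=
  ∀ α : σ → ℕ, ∑ i, α i ≤ d → Integrable (fun y => (∏ i, y i ^ α i) * ρ y) μ

theorem HasFiniteMoments.integrable_eval_mul [Fintype σ] (hρ : HasFiniteMoments ρ μ d)
    {g : MvPolynomial σ ℝ} (hg : g.totalDegree ≤ d) : Integrable (fun y => eval y g * ρ y) μ := by
  simp_rw [eval_eq', Finset.sum_mul, mul_assoc]
  refine integrable_finsetSum _ fun α hα => (hρ α ?_).const_mul _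
  rw [← Finsupp.degree_eq_sum]
  exact (le_totalDegree hα).trans hg

def ConvolutionIsSumSq (ρ : (σ → ℝ) → ℝ) (μ : Measure (σ → ℝ)) (d : ℕ)
    (p : MvPolynomial σ ℝ) : Prop :=
  ∃ q : MvPolynomial σ ℝ, q.totalDegree ≤ d ∧ IsSumSq q ∧
    ∀ x, Integrable (fun y => eval (x - y) p * ρ y) μ ∧ ∫ y, eval (x - y) p * ρ y ∂μ = eval x q

theorem convolutionIsSumSq_zero : ConvolutionIsSumSq ρ μ d 0 :=
  ⟨0, by simp, .zero, fun x => by simp⟩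

theorem ConvolutionIsSumSq.add {p₁ p₂ : MvPolynomial σ ℝ} (h₁ : ConvolutionIsSumSq ρ μ d p₁)
    (h₂ : ConvolutionIsSumSq ρ μ d p₂) : ConvolutionIsSumSq ρ μ d (p₁ + p₂) := by
  obtain ⟨q₁, hq₁, hs₁, hc₁⟩ := h₁
  obtain ⟨q₂, hq₂, hs₂, hc₂⟩ := h₂
  refine ⟨q₁ + q₂, (totalDegree_add _ _).trans (max_le hq₁ hq₂), hs₁.add hs₂, fun x => ?_⟩
  simp only [map_add, add_mul]
  exact ⟨(hc₁ x).1.add (hc₂ x).1, by rw [integral_add (hc₁ x).1 (hc₂ x).1, (hc₁ x).2, (hc₂ x).2]⟩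

theorem convolutionIsSumSq_mul_self [Fintype σ] (hρ : ∀ y, 0 ≤ ρ y)
    (hmom : HasFiniteMoments ρ μ d) {a : MvPolynomial σ ℝ} (ha : 2 * a.totalDegree ≤ d) :
    ConvolutionIsSumSq ρ μ d (a * a) := by
  obtain ⟨ι, _, U, W, hU, hW, hexp⟩ := exists_eval_sub_eq_sum_mul a
  have hWW (i j : ι) : Integrable (fun y => eval y (W i) * eval y (W j) * ρ y) μ := by
    simpa only [map_mul] using
      hmom.integrable_eval_mul ((totalDegree_mul _ _).trans (by linarith [hW i, hW j]))
  obtain ⟨B, hB⟩ := exists_integral_sq_sum_mul_eq_sum_sq hρ hWW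
  have hconv (x : σ → ℝ) : (fun y => eval (x - y) (a * a) * ρ y) =
      fun y => (∑ i, eval x (U i) * eval y (W i)) ^ 2 * ρ y := by
    ext y
    rw [map_mul, hexp, sq]
  refine ⟨∑ k, (∑ i, B k i • U i) ^ 2, ?_, IsSumSq.sum_sq _ _, fun x => ?_⟩
  · refine totalDegree_finsetSum_le fun k _ => (totalDegree_pow _ _).trans ?_
    have : (∑ i, B k i • U i).totalDegree ≤ a.totalDegree :=
      totalDegree_finsetSum_le fun i _ => (totalDegree_smul_le _ _).trans (hU i)
    omega
  · rw [hconv x]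
    refine ⟨integrable_sq_sum_mul hWW _, (hB _).trans ?_⟩
    simp [mulVec, dotProduct, smul_eval]

end Convolution

theorem sos_conv_kernel_general (n d : ℕ) (ρ : (Fin n → ℝ) → ℝ)
    (hρnonneg : ∀ y, 0 ≤ ρ y)
    (hmom : ∀ α : Fin n → ℕ, (∑ i, α i) ≤ d →
      Integrable (fun y : Fin n → ℝ => (∏ i, y i ^ α i) * ρ y))
    (p : MvPolynomial (Fin n) ℝ) (hp : p.totalDegree ≤ d) (hsos : IsSumSq p) :
    ∃ q : MvPolynomial (Fin n) ℝ, q.totalDegree ≤ d ∧ IsSumSq q ∧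
      ∀ x : Fin n → ℝ,
        (∫ y : Fin n → ℝ, MvPolynomial.eval (x - y) p * ρ y) = MvPolynomial.eval x q := by
  obtain ⟨k, g, rfl⟩ := hsos.exists_fin_sum_mul_self
  obtain ⟨q, hq, hqsos, hconv⟩ : ConvolutionIsSumSq ρ volume d (∑ i, g i * g i) :=
    Finset.sum_induction _ _ (fun _ _ => ConvolutionIsSumSq.add) convolutionIsSumSq_zero
      fun i hi => convolutionIsSumSq_mul_self hρnonneg hmom
        ((two_mul_totalDegree_le_totalDegree_sum_mul_self g hi).trans hp)
  exact ⟨q, hq, hqsos, fun x => (hconv x).2⟩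

/-- Convolution with a nonnegative kernel having finite moments up to degree `d` maps
sums of squares of degree at most `d` to sums of squares of degree at most `d`. -/
theorem sos_conv_kernel (n d : ℕ) (ρ : (Fin n → ℝ) → ℝ) (hρmeas : Measurable ρ)
    (hρnonneg : ∀ y, 0 ≤ ρ y)
    (hmom : ∀ α : Fin n → ℕ, (∑ i, α i) ≤ d →
      Integrable (fun y : Fin n → ℝ => (∏ i, y i ^ α i) * ρ y))
    (p : MvPolynomial (Fin n) ℝ) (hp : p.totalDegree ≤ d) (hsos : IsSumSq p) :
    ∃ q : MvPolynomial (Fin n) ℝ, q.totalDegree ≤ d ∧ IsSumSq q ∧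
      ∀ x : Fin n → ℝ,
        (∫ y : Fin n → ℝ, MvPolynomial.eval (x - y) p * ρ y) = MvPolynomial.eval x q :=
  sos_conv_kernel_general n d ρ hρnonneg hmom p hp hsos
end

section
/- (Richter's Theorem) Let X be a measurable space, let V be a finite-dimensional real vector space of measurable functions X → ℝ with dim V = d, and let μ be a (nonnegative) measure on X such that every f ∈ V is μ-integrable. Then there exist k ≤ d, weights c₁,…,c_k > 0, and points x₁,…,x_k ∈ X such that ∫_X f dμ = Σ_{i=1}^{k} c_i·f(x_i) for all f ∈ V. -/
/-!
Let `T x ∈ ℝᵈ` be the vector of values at `x` of a basis of `V`, so that `y := ∫ T dμ` encodes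
the moment functional. Then `y` lies in the convex cone generated by the values `T x` for `x` in
any set of full measure. Either `y` is an interior point of that cone, or a supporting functional
`f ≠ 0` is nonnegative on the cone with `f y ≤ 0`; then `f ∘ T ≥ 0` has integral `f y ≤ 0`, so
`f ∘ T = 0` a.e., and we recurse in the lower-dimensional space `ker f`, with the set of full
measure cut down to the points where `f ∘ T` vanishes. Carathéodory's theorem for cones then
writes `y` as a positive combination of linearly independent values `T xᵢ`, of which there are at
most `d`.
-/

open MeasureTheory Set Module

section Caratheodory

variable {E : Type*} [AddCommGroup E] [Module ℝ E]

theorem exists_nonneg_sum_smul_eq_of_not_linearIndependent {ι : Type*} [Fintype ι]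
    {w : ι → E} (hw : ¬LinearIndependent ℝ w) {c : ι → ℝ} (hc : 0 ≤ c) :
    ∃ c' : ι → ℝ, 0 ≤ c' ∧ (∃ i, c' i = 0) ∧ ∑ i, c' i • w i = ∑ i, c i • w i := by
  classical
  obtain ⟨g, hg, i₁, hi₁⟩ : ∃ g : ι → ℝ, ∑ i, g i • w i = 0 ∧ ∃ i, 0 < g i := by
    obtain ⟨g, hg, i, hi⟩ := Fintype.not_linearIndependent_iff.mp hw
    rcases hi.lt_or_gt with hi | hi
    · exact ⟨-g, by simp [hg], i, by simpa using hi⟩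
    · exact ⟨g, hg, i, hi⟩
  obtain ⟨i₀, hi₀, hmin⟩ := Finset.exists_min_image {i | 0 < g i} (fun i => c i / g i)
    ⟨i₁, by simpa using hi₁⟩
  rw [Finset.mem_filter_univ] at hi₀
  -- the largest step along `g` keeping `c - τ • g` nonnegative; it kills the coefficient at `i₀`
  set τ := c i₀ / g i₀
  refine ⟨c - τ • g, fun i => ?_, ⟨i₀, ?_⟩, ?_⟩
  · have hτ : 0 ≤ τ := div_nonneg (hc i₀) hi₀.le
    show 0 ≤ c i - τ * g i
    rcases lt_or_ge 0 (g i) with hgi | hgi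
    · have := hmin i (by simpa using hgi)
      rw [le_div_iff₀ hgi] at this
      linarith
    · have hci : 0 ≤ c i := hc i
      nlinarith
  · simp [τ, div_mul_cancel₀ _ hi₀.ne']
  · simp [sub_smul, Finset.sum_sub_distrib, mul_smul, ← Finset.smul_sum, hg]

theorem exists_linearIndependent_pos_sum_smul_eq {n : ℕ} (w : Fin n → E) (c : Fin n → ℝ)
    (hc : 0 ≤ c) :
    ∃ (k : ℕ) (c' : Fin k → ℝ) (e : Fin k → Fin n), (∀ j, 0 < c' j) ∧
      LinearIndependent ℝ (w ∘ e) ∧ ∑ j, c' j • w (e j) = ∑ i, c i • w i := by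
  induction n with
  | zero => exact ⟨0, Fin.elim0, Fin.elim0, fun j => j.elim0, linearIndependent_empty_type, by simp⟩
  | succ n ih =>
    have drop (c' : Fin (n + 1) → ℝ) (hc' : 0 ≤ c') (i : Fin (n + 1)) (hi : c' i = 0)
        (hsum : ∑ i, c' i • w i = ∑ i, c i • w i) :
        ∃ (k : ℕ) (c'' : Fin k → ℝ) (e : Fin k → Fin (n + 1)), (∀ j, 0 < c'' j) ∧
          LinearIndependent ℝ (w ∘ e) ∧ ∑ j, c'' j • w (e j) = ∑ i, c i • w i := by
      obtain ⟨k, c'', e, hpos, hli, hsum'⟩ :=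
        ih (w ∘ i.succAbove) (c' ∘ i.succAbove) fun j => hc' _
      refine ⟨k, c'', i.succAbove ∘ e, hpos, hli, ?_⟩
      rw [← hsum, Fin.sum_univ_succAbove _ i, hi, zero_smul, zero_add]
      exact hsum'
    by_cases hzero : ∃ i, c i = 0
    · obtain ⟨i, hi⟩ := hzero
      exact drop c hc i hi rfl
    by_cases hli : LinearIndependent ℝ w
    · push Not at hzero
      exact ⟨n + 1, c, id, fun j => (hc j).lt_of_ne (hzero j).symm, hli, rfl⟩
    obtain ⟨c', hc', ⟨i, hi⟩, hsum⟩ := exists_nonneg_sum_smul_eq_of_not_linearIndependent hli hc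
    exact drop c' hc' i hi hsum

theorem PointedCone.exists_linearIndependent_of_mem_hull_range {ι : Type*} {v : ι → E} {x : E}
    (hx : x ∈ PointedCone.hull ℝ (range v)) :
    ∃ (k : ℕ) (c : Fin k → ℝ) (i : Fin k → ι), (∀ j, 0 < c j) ∧
      LinearIndependent ℝ (v ∘ i) ∧ ∑ j, c j • v (i j) = x := by
  obtain ⟨n, a, g, rfl⟩ := Submodule.mem_span_set'.mp hx
  choose i hi using fun j => (g j).2
  obtain ⟨k, c, e, hc, hli, hsum⟩ :=
    exists_linearIndependent_pos_sum_smul_eq (v ∘ i) (fun j => (a j : ℝ)) fun j => (a j).2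
  refine ⟨k, c, i ∘ e, hc, hli, ?_⟩
  simpa [hi] using hsum

end Caratheodory

section Separation

variable {E : Type*} [NormedAddCommGroup E] [NormedSpace ℝ E] [FiniteDimensional ℝ E]

theorem Convex.exists_ne_zero_le_of_notMem_interior {s : Set E} (hs : Convex ℝ s)
    (hne : s.Nonempty) {x : E} (hx : x ∉ interior s) :
    ∃ f : StrongDual ℝ E, f ≠ 0 ∧ ∀ a ∈ s, f a ≤ f x := by
  rcases (interior s).eq_empty_or_nonempty with hint | hint
  · -- `s` lies in a proper affine subspace, on which some nonzero functional is constant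
    obtain ⟨p, hp⟩ := hne
    have hspan : vectorSpan ℝ s < ⊤ := by
      rw [lt_top_iff_ne_top, ne_eq,
        ← AffineSubspace.affineSpan_eq_top_iff_vectorSpan_eq_top_of_nonempty ℝ E E ⟨p, hp⟩,
        ← hs.interior_nonempty_iff_affineSpan_eq_top, hint]
      exact Set.not_nonempty_empty
    obtain ⟨f, hf0, hker⟩ := (vectorSpan ℝ s).exists_le_ker_of_lt_top hspan
    have hconst : ∀ a ∈ s, f a = f p := fun a ha => by
      rw [← sub_eq_zero, ← map_sub]
      exact hker (vsub_mem_vectorSpan ℝ ha hp)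
    let g : StrongDual ℝ E := LinearMap.toContinuousLinearMap f
    have hg0 : g ≠ 0 := fun h => hf0 (by ext y; simpa [g] using congr($h y))
    rcases le_total (f p) (f x) with h | h
    · exact ⟨g, hg0, fun a ha => by simpa [g, hconst a ha] using h⟩
    · exact ⟨-g, neg_ne_zero.mpr hg0, fun a ha => by simpa [g, hconst a ha] using h⟩
  · exact geometric_hahn_banach_of_nonempty_interior_point hs hx hint

theorem PointedCone.exists_dual_nonneg_of_notMem_interior (C : PointedCone ℝ E) {y : E}
    (hy : y ∉ interior (C : Set E)) :
    ∃ f : StrongDual ℝ E, f ≠ 0 ∧ (∀ z ∈ C, 0 ≤ f z) ∧ f y ≤ 0 := by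
  obtain ⟨g, hg0, hg⟩ := C.convex.exists_ne_zero_le_of_notMem_interior ⟨0, C.zero_mem⟩ hy
  have hgy : 0 ≤ g y := by simpa using hg 0 C.zero_mem
  refine ⟨-g, neg_ne_zero.mpr hg0, fun z hz => ?_, by simpa using hgy⟩
  by_contra! hz'
  have hgz : 0 < g z := by simpa using hz'
  have := hg (((g y + 1) / g z) • z) (C.smul_mem (by positivity) hz)
  rw [map_smul, smul_eq_mul, div_mul_cancel₀ _ hgz.ne'] at this
  linarith

end Separation

theorem integral_mem_hull_image {X E : Type*} [MeasurableSpace X] {μ : Measure X}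
    [NormedAddCommGroup E] [NormedSpace ℝ E] [FiniteDimensional ℝ E] {T : X → E}
    (hT : Integrable T μ) {A : Set X} (hA : ∀ᵐ x ∂μ, x ∈ A) :
    ∫ x, T x ∂μ ∈ PointedCone.hull ℝ (T '' A) := by
  induction h : finrank ℝ E using Nat.strong_induction_on generalizing E A with
  | _ n ih =>
  by_cases hint : ∫ x, T x ∂μ ∈ interior (PointedCone.hull ℝ (T '' A) : Set E)
  · exact interior_subset hint
  obtain ⟨f, hf0, hfC, hfy⟩ := PointedCone.exists_dual_nonneg_of_notMem_interior _ hint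
  have hfT_nonneg : 0 ≤ᵐ[μ] fun x => f (T x) :=
    hA.mono fun x hx => hfC _ (PointedCone.subset_hull (mem_image_of_mem T hx))
  have hfy0 : f (∫ x, T x ∂μ) = 0 := by
    refine le_antisymm hfy ?_
    rw [← f.integral_comp_comm hT]
    exact integral_nonneg_of_ae hfT_nonneg
  have hfT : ∀ᵐ x ∂μ, f (T x) = 0 :=
    (integral_eq_zero_iff_of_nonneg_ae hfT_nonneg (f.integrable_comp hT)).mp
      (by rw [f.integral_comp_comm hT, hfy0])
  set K := LinearMap.ker (f : E →ₗ[ℝ] ℝ)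
  obtain ⟨P, hP⟩ := Submodule.ClosedComplemented.of_finiteDimensional K
  have hK : finrank ℝ K < n :=
    h ▸ Submodule.finrank_lt (LinearMap.ker_eq_top.not.mpr (by exact_mod_cast hf0))
  have hmem := ih _ hK (P.integrable_comp hT) (hA.and hfT) rfl
  rw [P.integral_comp_comm hT] at hmem
  have hy : ∫ x, T x ∂μ = K.subtype (P (∫ x, T x ∂μ)) := by
    simpa using (congrArg Subtype.val (hP ⟨_, hfy0⟩)).symm
  rw [hy]
  refine (Submodule.map_span_le (K.subtype.restrictScalars {c : ℝ // 0 ≤ c}) _ _).mpr ?_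
    (Submodule.mem_map_of_mem hmem)
  rintro _ ⟨x, ⟨hxA, hx0⟩, rfl⟩
  have hPT : K.subtype (P (T x)) = T x := congrArg Subtype.val (hP ⟨T x, hx0⟩)
  rw [LinearMap.restrictScalars_apply, hPT]
  exact PointedCone.subset_hull (mem_image_of_mem T hxA)

theorem Module.Basis.exists_dual_comp_eval_eq {X ι : Type*} [Fintype ι] {V : Submodule ℝ (X → ℝ)}
    (b : Basis ι ℝ V) (f : V) :
    ∃ φ : StrongDual ℝ (ι → ℝ), ∀ x, (f : X → ℝ) x = φ fun i => (b i : X → ℝ) x := by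
  refine ⟨∑ i, b.repr f i • ContinuousLinearMap.proj i, fun x => ?_⟩
  calc (f : X → ℝ) x = ((∑ i, b.repr f i • b i : V) : X → ℝ) x := by rw [b.sum_repr]
    _ = _ := by simp [Finset.sum_apply, -Module.Basis.sum_repr]

theorem richter_general (X : Type*) [MeasurableSpace X] (d : ℕ)
    (V : Submodule ℝ (X → ℝ))
    (hfin : FiniteDimensional ℝ V) (hdim : Module.finrank ℝ V = d)
    (μ : Measure X) (hint : ∀ f ∈ V, Integrable f μ) :
    ∃ (k : ℕ) (_ : k ≤ d) (c : Fin k → ℝ) (x : Fin k → X),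
      (∀ i, 0 < c i) ∧
      ∀ f ∈ V, (∫ a, f a ∂μ) = ∑ i, c i * f (x i) := by
  subst hdim
  let b := Module.finBasis ℝ V
  set T : X → Fin (finrank ℝ V) → ℝ := fun x i => (b i : X → ℝ) x
  have hT : Integrable T μ := integrable_pi_iff.mpr fun i => hint _ (b i).2
  have hmem : ∫ a, T a ∂μ ∈ PointedCone.hull ℝ (range T) := by
    simpa using integral_mem_hull_image hT (A := univ) (by simp)
  obtain ⟨k, c, x, hc, hli, hsum⟩ := PointedCone.exists_linearIndependent_of_mem_hull_range hmem
  refine ⟨k, by simpa using hli.fintype_card_le_finrank, c, x, hc, fun f hf => ?_⟩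
  obtain ⟨φ, hφ⟩ : ∃ φ : StrongDual ℝ _, ∀ a, f a = φ (T a) :=
    b.exists_dual_comp_eval_eq ⟨f, hf⟩
  calc ∫ a, f a ∂μ = φ (∫ a, T a ∂μ) := by simp_rw [hφ]; exact φ.integral_comp_comm hT
    _ = ∑ j, c j * f (x j) := by simp [← hsum, hφ]

/-- **Richter's Theorem**: a moment functional on a `d`-dimensional vector space of
measurable functions is represented by a `k`-atomic measure with `k ≤ d` atoms. -/
theorem richter (X : Type*) [MeasurableSpace X] (d : ℕ)
    (V : Submodule ℝ (X → ℝ)) (hmeas : ∀ f ∈ V, Measurable f)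
    (hfin : FiniteDimensional ℝ V) (hdim : Module.finrank ℝ V = d)
    (μ : Measure X) (hint : ∀ f ∈ V, Integrable f μ) :
    ∃ (k : ℕ) (_ : k ≤ d) (c : Fin k → ℝ) (x : Fin k → X),
      (∀ i, 0 < c i) ∧
      ∀ f ∈ V, (∫ a, f a ∂μ) = ∑ i, c i * f (x i) :=
  richter_general X d V hfin hdim μ hint
end

section
/- The heat evolution of the Motzkin polynomial f_Motz(x,y) = 1 − 3x²y² + x⁴y² + x²y⁴ is given explicitly by 𝔭_Motz(x,y,t) = 1 − 12t² + 48t³ + 6t(−1+6t)(x²+y²) + (−3+24t)x²y² + 2t(x⁴+y⁴) + x⁴y² + x²y⁴, i.e., this polynomial satisfies ∂_t 𝔭 = Δ𝔭 on ℝ² × ℝ with 𝔭(x,y,0) = f_Motz(x,y). -/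
/-- The heat evolution of the Motzkin polynomial. -/
noncomputable def pMotz (x y t : ℝ) : ℝ :=
  1 - 12 * t ^ 2 + 48 * t ^ 3 + 6 * t * (-1 + 6 * t) * (x ^ 2 + y ^ 2)
    + (-3 + 24 * t) * x ^ 2 * y ^ 2 + 2 * t * (x ^ 4 + y ^ 4)
    + x ^ 4 * y ^ 2 + x ^ 2 * y ^ 4

lemma hasDerivAt_poly4 (a b c d e s : ℝ) :
    HasDerivAt (fun s : ℝ => a + b * s + c * s ^ 2 + d * s ^ 3 + e * s ^ 4)
      (b + 2 * c * s + 3 * d * s ^ 2 + 4 * e * s ^ 3) s := by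
  have h : HasDerivAt (fun s : ℝ => a + b * s + c * s ^ 2 + d * s ^ 3 + e * s ^ 4)
      (0 + b * 1 + c * (↑2 * s ^ 1) + d * (↑3 * s ^ 2) + e * (↑4 * s ^ 3)) s := by
    exact ((((hasDerivAt_const s a).add ((hasDerivAt_id s).const_mul b)).add
      ((hasDerivAt_pow 2 s).const_mul c)).add ((hasDerivAt_pow 3 s).const_mul d)).add
      ((hasDerivAt_pow 4 s).const_mul e)
  convert h using 1
  ring

lemma deriv_poly4 (a b c d e : ℝ) :
    deriv (fun s : ℝ => a + b * s + c * s ^ 2 + d * s ^ 3 + e * s ^ 4)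
      = fun s => b + 2 * c * s + 3 * d * s ^ 2 + 4 * e * s ^ 3 := by
  funext s
  exact (hasDerivAt_poly4 a b c d e s).deriv

lemma iteratedDeriv_two_poly4 (a b c d e x : ℝ) :
    iteratedDeriv 2 (fun s : ℝ => a + b * s + c * s ^ 2 + d * s ^ 3 + e * s ^ 4) x
      = 2 * c + 6 * d * x + 12 * e * x ^ 2 := by
  rw [iteratedDeriv_succ, iteratedDeriv_one, deriv_poly4]
  have h : (fun s : ℝ => b + 2 * c * s + 3 * d * s ^ 2 + 4 * e * s ^ 3)
      = fun s : ℝ => b + (2 * c) * s + (3 * d) * s ^ 2 + (4 * e) * s ^ 3 + 0 * s ^ 4 := by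
    funext s; ring
  rw [h, deriv_poly4]
  ring

/-- `𝔭_Motz` solves the heat equation `∂_t 𝔭 = Δ𝔭` on `ℝ² × ℝ` with initial value the
Motzkin polynomial `f_Motz(x,y) = 1 − 3x²y² + x⁴y² + x²y⁴`. -/
theorem pMotz_solves_heat_equation :
    (∀ x y t : ℝ,
      deriv (fun s => pMotz x y s) t
        = iteratedDeriv 2 (fun u => pMotz u y t) x
          + iteratedDeriv 2 (fun v => pMotz x v t) y) ∧
    (∀ x y : ℝ,
      pMotz x y 0 = 1 - 3 * x ^ 2 * y ^ 2 + x ^ 4 * y ^ 2 + x ^ 2 * y ^ 4) := by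
  constructor
  · intro x y t
    have ht : (fun s => pMotz x y s)
        = fun s : ℝ => (1 + (-3) * x ^ 2 * y ^ 2 + x ^ 4 * y ^ 2 + x ^ 2 * y ^ 4)
          + (-6 * (x ^ 2 + y ^ 2) + 24 * x ^ 2 * y ^ 2 + 2 * (x ^ 4 + y ^ 4)) * s
          + (-12 + 36 * (x ^ 2 + y ^ 2)) * s ^ 2 + 48 * s ^ 3 + 0 * s ^ 4 := by
      funext s; unfold pMotz; ring
    have hx : (fun u => pMotz u y t)
        = fun u : ℝ => (1 - 12 * t ^ 2 + 48 * t ^ 3 + 6 * t * (-1 + 6 * t) * y ^ 2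
            + 2 * t * y ^ 4) + 0 * u
          + (6 * t * (-1 + 6 * t) + (-3 + 24 * t) * y ^ 2 + y ^ 4) * u ^ 2
          + 0 * u ^ 3 + (2 * t + y ^ 2) * u ^ 4 := by
      funext u; unfold pMotz; ring
    have hy : (fun v => pMotz x v t)
        = fun v : ℝ => (1 - 12 * t ^ 2 + 48 * t ^ 3 + 6 * t * (-1 + 6 * t) * x ^ 2
            + 2 * t * x ^ 4) + 0 * v
          + (6 * t * (-1 + 6 * t) + (-3 + 24 * t) * x ^ 2 + x ^ 4) * v ^ 2
          + 0 * v ^ 3 + (2 * t + x ^ 2) * v ^ 4 := by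
      funext v; unfold pMotz; ring
    rw [ht, hx, hy, deriv_poly4, iteratedDeriv_two_poly4, iteratedDeriv_two_poly4]
    ring
  · intro x y
    unfold pMotz
    ring
end

section
/- The heat-evolved Motzkin polynomial at time t = 1, namely 𝔭_Motz(x,y,1) = 37 + 30x² + 30y² + 21x²y² + 2x⁴ + 2y⁴ + x⁴y² + x²y⁴, is a sum of squares of polynomials; explicitly, 𝔭_Motz(x,y,1) = 37(1 − (11/148)x² − (11/148)y²)² + (71/2)(x − (4/71)xy²)² + (71/2)(y − (4/71)x²y)² + (57/2)x²y² + (1063/592)(x² + (27/1063)y²)² + (3815/2126)y⁴ + (63/71)x⁴y² + (63/71)x²y⁴. -/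
open MvPolynomial

/-- The heat-evolved Motzkin polynomial at time `t = 1`, as an element of `ℝ[x,y]`. -/
noncomputable def pMotzPoly1 : MvPolynomial (Fin 2) ℝ :=
  C (1 - 12 * 1 ^ 2 + 48 * 1 ^ 3 : ℝ)
    + C (6 * 1 * (-1 + 6 * 1) : ℝ) * (X 0 ^ 2 + X 1 ^ 2)
    + C (-3 + 24 * 1 : ℝ) * X 0 ^ 2 * X 1 ^ 2
    + C (2 * 1 : ℝ) * (X 0 ^ 4 + X 1 ^ 4)
    + X 0 ^ 4 * X 1 ^ 2 + X 0 ^ 2 * X 1 ^ 4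

lemma aux_sos_smul_sq {c : ℝ} (hc : 0 ≤ c) (p : MvPolynomial (Fin 2) ℝ) :
    IsSumSq (C c * p ^ 2) := by
  have h : C c * p ^ 2 = (C (Real.sqrt c) * p) * (C (Real.sqrt c) * p) + 0 := by
    rw [add_zero]
    rw [mul_mul_mul_comm, ← C_mul, Real.mul_self_sqrt hc, sq]
  rw [h]
  exact IsSumSq.sq_add _ IsSumSq.zero

/-- The heat-evolved Motzkin polynomial at time `t = 1` is a sum of squares of
polynomials, with the explicit decomposition
`37(1 − (11/148)x² − (11/148)y²)² + (71/2)(x − (4/71)xy²)² + (71/2)(y − (4/71)x²y)²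
 + (57/2)x²y² + (1063/592)(x² + (27/1063)y²)² + (3815/2126)y⁴ + (63/71)x⁴y² + (63/71)x²y⁴`. -/
theorem pMotz_at_one_is_sos :
    IsSumSq pMotzPoly1 ∧
    ∀ x y : ℝ,
      pMotz x y 1
        = 37 * (1 - (11 / 148) * x ^ 2 - (11 / 148) * y ^ 2) ^ 2
          + (71 / 2) * (x - (4 / 71) * x * y ^ 2) ^ 2
          + (71 / 2) * (y - (4 / 71) * x ^ 2 * y) ^ 2
          + (57 / 2) * x ^ 2 * y ^ 2
          + (1063 / 592) * (x ^ 2 + (27 / 1063) * y ^ 2) ^ 2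
          + (3815 / 2126) * y ^ 4
          + (63 / 71) * x ^ 4 * y ^ 2
          + (63 / 71) * x ^ 2 * y ^ 4 := by
  constructor
  · have h : pMotzPoly1 =
        C (37 : ℝ) * (1 - C (11 / 148 : ℝ) * X 0 ^ 2 - C (11 / 148 : ℝ) * X 1 ^ 2) ^ 2
          + (C (71 / 2 : ℝ) * (X 0 - C (4 / 71 : ℝ) * X 0 * X 1 ^ 2) ^ 2
          + (C (71 / 2 : ℝ) * (X 1 - C (4 / 71 : ℝ) * X 0 ^ 2 * X 1) ^ 2
          + (C (57 / 2 : ℝ) * (X 0 * X 1) ^ 2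
          + (C (1063 / 592 : ℝ) * (X 0 ^ 2 + C (27 / 1063 : ℝ) * X 1 ^ 2) ^ 2
          + (C (3815 / 2126 : ℝ) * (X 1 ^ 2) ^ 2
          + (C (63 / 71 : ℝ) * (X 0 ^ 2 * X 1) ^ 2
          + C (63 / 71 : ℝ) * (X 0 * X 1 ^ 2) ^ 2)))))) := by
      apply MvPolynomial.funext
      intro v
      unfold pMotzPoly1
      simp only [map_add, map_sub, map_mul, map_pow, map_one, eval_C, eval_X, map_ofNat]
      norm_num
      ring
    rw [h]
    repeat' apply IsSumSq.add
    all_goals apply aux_sos_smul_sq; norm_num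
  · intro x y
    unfold pMotz
    ring
end
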